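/- Let p ≥ 1, q > 0, c > 0 and f(t) = c·t^q. For any two persistence diagrams X, Y one has π_f(X,Y) ≤ W_p(X,Y)^{p/(p+q)} · c^{−1/(p+q)}. -/

import Mathlib

open scoped ENNReal Classical

/-- A persistence diagram: a finite multiset of points strictly above the diagonal of `ℝ²`.
Distances in `ℝ × ℝ` are measured by the product (sup-norm, i.e. `p = ∞`) metric `dist`. -/
structure PD where
  pts : Multiset (ℝ × ℝ)
  birth_lt_death : ∀ x ∈ pts, x.1 < x.2

/-- Orthogonal projection of a point onto the diagonal `Δ = {(t, t) : t ∈ ℝ}`. -/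
noncomputable def diagProj (x : ℝ × ℝ) : ℝ × ℝ := ((x.1 + x.2) / 2, (x.1 + x.2) / 2)

/-- The distance of a matched pair: a pair of two diagonal points counts as distance `0`,
otherwise the distance in `ℝ × ℝ` is used. -/
noncomputable def pairCost (u v : ℝ × ℝ) : ℝ :=
  if u.1 = u.2 ∧ v.1 = v.2 then 0 else dist u v

/-- `P` encodes a matching, i.e. a bijection `η : X₀ ⊔ Y₀' → Y₀ ⊔ X₀'`, as the multiset of
matched pairs `(u, η u)`: its first marginal is `X₀ ⊔ Y₀'` and its second is `Y₀ ⊔ X₀'`. -/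
def IsMatching (X Y : PD) (P : Multiset ((ℝ × ℝ) × (ℝ × ℝ))) : Prop :=
  P.map Prod.fst = X.pts + Y.pts.map diagProj ∧
  P.map Prod.snd = Y.pts + X.pts.map diagProj

/-- The bottleneck profile `D_{X,Y}(t) = inf_η |{u : d(u, η u) > t}|`. -/
noncomputable def bprofile (X Y : PD) (t : ℝ) : ℝ≥0∞ :=
  ⨅ P : {P : Multiset ((ℝ × ℝ) × (ℝ × ℝ)) // IsMatching X Y P},
    ((Multiset.countP (fun uv => t < pairCost uv.1 uv.2) P.1 : ℕ) : ℝ≥0∞)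

/-- The `f`-Prokhorov distance `π_f(X,Y) = inf {t > 0 : D_{X,Y}(t) < f(t)}`
(with value `∞` if no such `t` exists). -/
noncomputable def prokhorov (f : ℝ → ℝ) (X Y : PD) : ℝ≥0∞ :=
  ⨅ t : {t : ℝ // 0 < t ∧ bprofile X Y t < ENNReal.ofReal (f t)}, ENNReal.ofReal t.1

/-- The `p`-Wasserstein distance `W_p(X,Y) = inf_η (Σ_u d(u, η u)^p)^(1/p)`. -/
noncomputable def wassersteinDist (p : ℝ) (X Y : PD) : ℝ :=
  sInf {r : ℝ | ∃ P, IsMatching X Y P ∧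
    r = ((P.map fun uv => pairCost uv.1 uv.2 ^ p).sum) ^ (1 / p)}

/-! A matching of `p`-cost below `c t^(p+q)` has, by Markov's inequality, fewer than `c t^q`
pairs of length `> t`; and `t > W_p^(p/(p+q)) c^(-1/(p+q))` says exactly `W_p^p < c t^(p+q)`,
so that every such `t` bounds `π_f` from above. -/

theorem Multiset.countP_lt_mul_le_sum_map {α : Type*} (s : Multiset α) (g : α → ℝ)
    (hg : ∀ a ∈ s, 0 ≤ g a) (b : ℝ) :
    (s.countP (fun a => b < g a) : ℝ) * b ≤ (s.map g).sum := by
  induction s using Multiset.induction_on with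
  | empty => simp
  | cons a s ih =>
    rw [Multiset.forall_mem_cons] at hg
    have hs := ih hg.2
    rw [Multiset.countP_cons, Multiset.map_cons, Multiset.sum_cons]
    split_ifs with hb
    · push_cast; linarith
    · simp only [add_zero]; linarith [hg.1]

theorem pairCost_nonneg (u v : ℝ × ℝ) : 0 ≤ pairCost u v := by
  unfold pairCost
  split
  exacts [le_rfl, dist_nonneg]

theorem exists_isMatching (X Y : PD) : ∃ P, IsMatching X Y P :=
  ⟨X.pts.map (fun x => (x, diagProj x)) + Y.pts.map (fun y => (diagProj y, y)),
    by simp [IsMatching, Multiset.map_map, add_comm]⟩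

noncomputable def matchingCost (p : ℝ) (P : Multiset ((ℝ × ℝ) × (ℝ × ℝ))) : ℝ :=
  (P.map fun uv => pairCost uv.1 uv.2 ^ p).sum

theorem matchingCost_nonneg (p : ℝ) (P : Multiset ((ℝ × ℝ) × (ℝ × ℝ))) :
    0 ≤ matchingCost p P :=
  Multiset.sum_nonneg fun _ hx => by
    obtain ⟨uv, -, rfl⟩ := Multiset.mem_map.1 hx
    exact Real.rpow_nonneg (pairCost_nonneg _ _) p

theorem countP_mul_rpow_le_matchingCost {p t : ℝ} (hp : 0 < p) (ht : 0 ≤ t)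
    (P : Multiset ((ℝ × ℝ) × (ℝ × ℝ))) :
    (P.countP (fun uv => t < pairCost uv.1 uv.2) : ℝ) * t ^ p ≤ matchingCost p P := by
  have hcount : P.countP (fun uv => t < pairCost uv.1 uv.2)
      = P.countP (fun uv => t ^ p < pairCost uv.1 uv.2 ^ p) :=
    Multiset.countP_congr rfl fun uv _ =>
      propext (Real.rpow_lt_rpow_iff ht (pairCost_nonneg _ _) hp).symm
  rw [hcount]
  exact Multiset.countP_lt_mul_le_sum_map P _
    (fun _ _ => Real.rpow_nonneg (pairCost_nonneg _ _) p) _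

theorem bprofile_le_countP {X Y : PD} {P : Multiset ((ℝ × ℝ) × (ℝ × ℝ))}
    (hP : IsMatching X Y P) (t : ℝ) :
    bprofile X Y t ≤ P.countP (fun uv => t < pairCost uv.1 uv.2) :=
  iInf_le_of_le ⟨P, hP⟩ le_rfl

theorem bddBelow_wassersteinDist_set (p : ℝ) (X Y : PD) :
    BddBelow {r : ℝ | ∃ P, IsMatching X Y P ∧ r = matchingCost p P ^ (1 / p)} :=
  ⟨0, fun _ ⟨P, _, hr⟩ => hr ▸ Real.rpow_nonneg (matchingCost_nonneg p P) _⟩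

theorem wassersteinDist_nonneg (p : ℝ) (X Y : PD) : 0 ≤ wassersteinDist p X Y :=
  Real.sInf_nonneg fun _ ⟨P, _, hr⟩ => hr ▸ Real.rpow_nonneg (matchingCost_nonneg p P) _

theorem exists_isMatching_matchingCost_lt {p a : ℝ} (hp : 0 < p) {X Y : PD}
    (h : wassersteinDist p X Y ^ p < a) : ∃ P, IsMatching X Y P ∧ matchingCost p P < a := by
  have hW := wassersteinDist_nonneg p X Y
  have ha : 0 ≤ a := (Real.rpow_nonneg hW p).trans h.le
  have hp' : 0 < 1 / p := one_div_pos.2 hp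
  have hlt : wassersteinDist p X Y < a ^ (1 / p) := by
    simpa [← Real.rpow_mul hW, hp.ne'] using Real.rpow_lt_rpow (Real.rpow_nonneg hW p) h hp'
  obtain ⟨P, hP⟩ := exists_isMatching X Y
  obtain ⟨_, ⟨P, hP, rfl⟩, hPlt⟩ :=
    (csInf_lt_iff (bddBelow_wassersteinDist_set p X Y) ⟨_, P, hP, rfl⟩).1 hlt
  exact ⟨P, hP, (Real.rpow_lt_rpow_iff (matchingCost_nonneg p P) ha hp').1 hPlt⟩

theorem bprofile_lt_of_wassersteinDist_rpow_lt {p t a : ℝ} (hp : 0 < p) (ht : 0 < t)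
    {X Y : PD} (h : wassersteinDist p X Y ^ p < a * t ^ p) :
    bprofile X Y t < ENNReal.ofReal a := by
  obtain ⟨P, hP, hPa⟩ := exists_isMatching_matchingCost_lt hp h
  have hcount : (P.countP (fun uv => t < pairCost uv.1 uv.2) : ℝ) < a :=
    lt_of_mul_lt_mul_right ((countP_mul_rpow_le_matchingCost hp ht.le P).trans_lt hPa)
      (Real.rpow_nonneg ht.le p)
  calc bprofile X Y t ≤ P.countP (fun uv => t < pairCost uv.1 uv.2) := bprofile_le_countP hP t
    _ = ENNReal.ofReal (P.countP (fun uv => t < pairCost uv.1 uv.2)) :=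
        (ENNReal.ofReal_natCast _).symm
    _ < ENNReal.ofReal a :=
        (ENNReal.ofReal_lt_ofReal_iff ((Nat.cast_nonneg _).trans_lt hcount)).2 hcount

theorem prokhorov_le_of_forall_lt {f : ℝ → ℝ} {X Y : PD} {t₀ : ℝ} (ht₀ : 0 ≤ t₀)
    (h : ∀ t, t₀ < t → bprofile X Y t < ENNReal.ofReal (f t)) :
    prokhorov f X Y ≤ ENNReal.ofReal t₀ := by
  refine ENNReal.le_of_forall_pos_le_add fun ε hε _ => ?_
  have ht : t₀ < t₀ + ε := lt_add_of_pos_right t₀ hε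
  calc prokhorov f X Y ≤ ENNReal.ofReal (t₀ + ε) :=
        iInf_le_of_le ⟨t₀ + ε, ht₀.trans_lt ht, h _ ht⟩ le_rfl
    _ = ENNReal.ofReal t₀ + ε := by
        rw [ENNReal.ofReal_add ht₀ ε.coe_nonneg, ENNReal.ofReal_coe_nnreal]

theorem Real.rpow_lt_mul_rpow_of_rpow_div_mul_lt {p q c w t : ℝ} (hpq : 0 < p + q)
    (hc : 0 < c) (hw : 0 ≤ w) (ht : w ^ (p / (p + q)) * c ^ (-1 / (p + q)) < t) :
    w ^ p < c * t ^ (p + q) := by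
  set t₀ := w ^ (p / (p + q)) * c ^ (-1 / (p + q))
  have ht₀ : 0 ≤ t₀ := by positivity
  have ht₀pow : t₀ ^ (p + q) = w ^ p / c := by
    rw [Real.mul_rpow (by positivity) (by positivity), ← Real.rpow_mul hw, ← Real.rpow_mul hc.le,
      div_mul_cancel₀ _ hpq.ne', div_mul_cancel₀ _ hpq.ne', Real.rpow_neg_one, div_eq_mul_inv]
  calc w ^ p = c * t₀ ^ (p + q) := by rw [ht₀pow, mul_div_cancel₀ _ hc.ne']
    _ < c * t ^ (p + q) := mul_lt_mul_of_pos_left (Real.rpow_lt_rpow ht₀ ht hpq) hc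

/-- For `p ≥ 1`, `q > 0`, `c > 0` and `f(t) = c·t^q`, one has
`π_f(X,Y) ≤ W_p(X,Y)^(p/(p+q)) · c^(-1/(p+q))`. -/
theorem prokhorov_le_wasserstein (p q c : ℝ) (hp : 1 ≤ p) (hq : 0 < q) (hc : 0 < c)
    (X Y : PD) :
    prokhorov (fun t => c * t ^ q) X Y
      ≤ ENNReal.ofReal (wassersteinDist p X Y ^ (p / (p + q)) * c ^ (-1 / (p + q))) := by
  have hp₀ : 0 < p := zero_lt_one.trans_le hp
  have hW := wassersteinDist_nonneg p X Y
  refine prokhorov_le_of_forall_lt (by positivity) fun t ht => ?_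
  have ht₀ : 0 < t := lt_of_le_of_lt (by positivity) ht
  refine bprofile_lt_of_wassersteinDist_rpow_lt hp₀ ht₀ ?_
  rw [mul_assoc, ← Real.rpow_add ht₀, add_comm q]
  exact Real.rpow_lt_mul_rpow_of_rpow_div_mul_lt (by linarith) hc hW ht
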